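/- Let α ∈ (1,2] and γ > 0. There exists a constant C = C(α,γ) > 0 such that for all x ∈ ℝ, |(−Δ)^{γ/2}G(x)| ≤ C / (1 + |x|^{1+γ}). -/

import Mathlib

open MeasureTheory

/-- The fractional Laplacian of the kernel `G`:
`(−Δ)^{γ/2}G(x) = (1/(2π)) ∫_ℝ |ξ|^γ exp(−iξx − |ξ|^α) dξ` (real part). -/
noncomputable def fracLapGKernel (α γ : ℝ) (x : ℝ) : ℝ :=
  (1 / (2 * Real.pi)) *
    ∫ ξ : ℝ, |ξ| ^ γ *
      (Complex.exp (-(Complex.I * (ξ : ℂ) * (x : ℂ)) - ((|ξ| ^ α : ℝ) : ℂ))).re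

/-!
By evenness in `ξ`, `(−Δ)^{γ/2}G(x) = π⁻¹ ∫₀^∞ r^γ e^{-r^α} cos(xr) dr`, which is bounded by
`π⁻¹ Γ((γ+1)/α) / α`. For the decay at `x > 0`, write this integral as the real part of
`∫₀^∞ w^γ e^{-w^α - ixw} dw` and rotate the contour onto the ray `w = r e^{-iθ}`, `θ = π/(6α)`.
The ray integral does not depend on `θ`: by the Cauchy–Riemann equations its `θ`-derivative is
the integral of an exact `r`-derivative vanishing at both ends, and differentiation under the
integral sign is dominated since `Re w^α ≥ r^α/2` for `|αθ| ≤ π/3`, while `α > 1` lets `r^α`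
absorb the linear term `xr`. On the rotated ray `|e^{-ixw}| = e^{-xr sin θ}`, whence the bound
`Γ(γ+1) / (x sin θ)^{γ+1}`.
-/

open Set Real Filter Topology
open Complex (I)
open scoped Complex

lemma tendsto_rpow_mul_exp_neg_mul_rpow_atTop_nhds_zero {p : ℝ} (hp : 0 < p) (s : ℝ) {b : ℝ}
    (hb : 0 < b) : Tendsto (fun r : ℝ => r ^ s * Real.exp (-b * r ^ p)) atTop (𝓝 0) := by
  refine ((tendsto_rpow_mul_exp_neg_mul_atTop_nhds_zero (s / p) b hb).comp
    (tendsto_rpow_atTop hp)).congr' ?_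
  filter_upwards [eventually_ge_atTop 0] with r hr
  rw [Function.comp_apply, ← Real.rpow_mul hr, mul_div_cancel₀ _ hp.ne']

lemma exists_mul_le_add_mul_rpow {α : ℝ} (hα : 1 < α) (x : ℝ) {c : ℝ} (hc : 0 < c) :
    ∃ A, ∀ r, 0 ≤ r → x * r ≤ A + c * r ^ α := by
  set R := (|x| / c) ^ (α - 1)⁻¹
  have hR : 0 ≤ R := by positivity
  refine ⟨|x| * R, fun r hr => ?_⟩
  have hxr : x * r ≤ |x| * r := mul_le_mul_of_nonneg_right (le_abs_self x) hr
  rcases le_or_gt r R with hrR | hRr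
  · nlinarith [abs_nonneg x, show 0 ≤ c * r ^ α by positivity]
  · have hRα : R ^ (α - 1) = |x| / c := by
      rw [← Real.rpow_mul (by positivity), inv_mul_cancel₀ (by linarith), Real.rpow_one]
    have hr' : |x| / c ≤ r ^ (α - 1) :=
      hRα ▸ Real.rpow_le_rpow hR hRr.le (by linarith)
    have hrα : r ^ α = r ^ (α - 1) * r := by
      rw [← Real.rpow_add_one (hR.trans_lt hRr).ne', sub_add_cancel]
    have hx_le : |x| ≤ c * r ^ (α - 1) := by rwa [div_le_iff₀' hc] at hr'
    nlinarith [mul_nonneg (abs_nonneg x) hR]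

lemma abs_mul_le_add_mul_of_mem_ball {a θ t δ : ℝ} (ha : 0 < a) (ht : t ∈ Metric.ball θ δ) :
    |a * t| ≤ |a * θ| + a * δ := by
  rw [Metric.mem_ball, Real.dist_eq] at ht
  calc |a * t| = |a * θ + a * (t - θ)| := by ring_nf
    _ ≤ |a * θ| + |a * (t - θ)| := abs_add_le _ _
    _ = |a * θ| + a * |t - θ| := by rw [abs_mul a (t - θ), abs_of_pos ha]
    _ ≤ |a * θ| + a * δ := by gcongr

lemma integrableOn_rpow_mul_exp_neg_mul_rpow_mul_add {p s b : ℝ} (hs : -1 < s) (hp : 0 < p)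
    (hb : 0 < b) (c₀ c₁ c₂ : ℝ) :
    IntegrableOn (fun r => r ^ s * Real.exp (-b * r ^ p) * (c₀ + c₁ * r ^ p + c₂ * r)) (Ioi 0) := by
  have hf (q : ℝ) (hq : -1 < q) := integrableOn_rpow_mul_exp_neg_mul_rpow hq hp hb
  refine IntegrableOn.congr_fun ((((hf s hs).const_mul c₀).add
    ((hf (s + p) (by linarith)).const_mul c₁)).add ((hf (s + 1) (by linarith)).const_mul c₂))
    (fun r hr => ?_) measurableSet_Ioi
  simp only [Pi.add_apply]
  rw [Real.rpow_add hr, Real.rpow_add_one hr.ne']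
  ring

lemma half_le_cos_of_abs_le {t : ℝ} (ht : |t| ≤ π / 3) : 1 / 2 ≤ Real.cos t := by
  rw [← Real.cos_abs, ← Real.cos_pi_div_three]
  exact Real.cos_le_cos_of_nonneg_of_le_pi (abs_nonneg t) (by linarith [Real.pi_pos]) ht

lemma sin_pi_div_six_mul_pos {α : ℝ} (hα : 1 / 6 < α) : 0 < Real.sin (π / (6 * α)) :=
  Real.sin_pos_of_pos_of_lt_pi (by positivity) (div_lt_self Real.pi_pos (by linarith))

/-- Along the ray `w = r * exp (-I * θ)`, the integrand `w ^ γ * exp (-w ^ α - I * x * w) * dw / dr`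
is `r ^ γ * exp (rayExponent α γ x θ r)` (principal branches of the powers). -/
noncomputable def rayExponent (α γ x θ r : ℝ) : ℂ :=
  -(I * (γ + 1) * θ) - ((r ^ α : ℝ) : ℂ) * cexp (-(I * α * θ)) - I * x * r * cexp (-(I * θ))

noncomputable def rayIntegrand (α γ x θ r : ℝ) : ℂ :=
  ((r ^ γ : ℝ) : ℂ) * cexp (rayExponent α γ x θ r)

noncomputable def rayExponentDeriv (α γ x θ r : ℝ) : ℂ :=
  -(I * (γ + 1)) + I * α * ((r ^ α : ℝ) : ℂ) * cexp (-(I * α * θ)) - x * r * cexp (-(I * θ))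

noncomputable def rayIntegral (α γ x θ : ℝ) : ℂ :=
  ∫ r in Ioi 0, rayIntegrand α γ x θ r

section RayIntegrand

variable {α γ x θ r : ℝ}

lemma re_rayExponent :
    (rayExponent α γ x θ r).re = -(r ^ α * Real.cos (α * θ)) - x * r * Real.sin θ := by
  simp [rayExponent, Complex.exp_re, Complex.exp_im]

lemma norm_rpow_mul_exp_rayExponent (p : ℝ) (hr : 0 ≤ r) :
    ‖((r ^ p : ℝ) : ℂ) * cexp (rayExponent α γ x θ r)‖
      = r ^ p * Real.exp (-(r ^ α * Real.cos (α * θ)) - x * r * Real.sin θ) := by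
  rw [norm_mul, Complex.norm_exp, re_rayExponent, Complex.norm_real,
    Real.norm_of_nonneg (by positivity)]

lemma exists_norm_rpow_mul_exp_rayExponent_le (hα : 1 < α) (γ x : ℝ) :
    ∃ M, ∀ p θ r : ℝ, |α * θ| ≤ π / 3 → 0 ≤ r →
      ‖((r ^ p : ℝ) : ℂ) * cexp (rayExponent α γ x θ r)‖ ≤
        M * (r ^ p * Real.exp (-(1 / 4) * r ^ α)) := by
  obtain ⟨A, hA⟩ := exists_mul_le_add_mul_rpow hα |x| (c := 1 / 4) (by norm_num)
  refine ⟨Real.exp A, fun p θ r hθ hr => ?_⟩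
  have hcos : r ^ α / 2 ≤ r ^ α * Real.cos (α * θ) := by
    nlinarith [half_le_cos_of_abs_le hθ, show 0 ≤ r ^ α by positivity]
  have hsin : -(x * r * Real.sin θ) ≤ |x| * r := by
    have : |x * r * Real.sin θ| ≤ |x| * r := by
      rw [abs_mul, abs_mul, abs_of_nonneg hr]
      exact mul_le_of_le_one_right (by positivity) (Real.abs_sin_le_one θ)
    linarith [neg_abs_le (x * r * Real.sin θ)]
  rw [norm_rpow_mul_exp_rayExponent p hr, mul_left_comm, ← Real.exp_add]
  gcongr
  linarith [hA r hr]

lemma hasDerivAt_rayExponent_angle :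
    HasDerivAt (rayExponent α γ x · r) (rayExponentDeriv α γ x θ r) θ := by
  have hexp (c : ℂ) : HasDerivAt (fun θ : ℝ => cexp (-(c * θ))) (-c * cexp (-(c * θ))) θ := by
    simpa [mul_comm] using ((hasDerivAt_id θ).ofReal_comp.const_mul (-c)).cexp
  refine ((((hasDerivAt_id θ).ofReal_comp.const_mul (I * (γ + 1))).neg.sub
    ((hexp (I * α)).const_mul ((r ^ α : ℝ) : ℂ))).sub
      ((hexp I).const_mul (I * x * r))).congr_deriv ?_
  simp only [rayExponentDeriv, Complex.ofReal_one, mul_one]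
  linear_combination (x * r * cexp (-(I * θ))) * Complex.I_sq

lemma hasDerivAt_rayIntegrand_angle :
    HasDerivAt (rayIntegrand α γ x · r)
      (rayIntegrand α γ x θ r * rayExponentDeriv α γ x θ r) θ := by
  simpa [rayIntegrand, mul_assoc] using
    hasDerivAt_rayExponent_angle.cexp.const_mul ((r ^ γ : ℝ) : ℂ)

lemma hasDerivAt_rayExponent_radius (hr : 0 < r) :
    HasDerivAt (rayExponent α γ x θ ·)
      (-(((α * r ^ (α - 1) : ℝ) : ℂ) * cexp (-(I * α * θ))) - I * x * cexp (-(I * θ))) r := by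
  have hlin :
      HasDerivAt (fun r : ℝ => I * x * r * cexp (-(I * θ))) (I * x * cexp (-(I * θ))) r := by
    simpa using ((hasDerivAt_id r).ofReal_comp.const_mul (I * x)).mul_const (cexp (-(I * θ)))
  refine (((hasDerivAt_const r (-(I * (γ + 1) * θ))).sub
    ((Real.hasDerivAt_rpow_const (Or.inl hr.ne')).ofReal_comp.mul_const
      (cexp (-(I * α * θ))))).sub hlin).congr_deriv ?_
  ring

/-- Cauchy–Riemann in polar form: for `w = r * exp (-I * θ)`, `∂θ = -I * w * ∂w` and
`r * ∂r = w * ∂w`. -/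
lemma hasDerivAt_rpow_mul_exp_rayExponent_radius (hr : 0 < r) :
    HasDerivAt (fun r => ((r ^ (γ + 1) : ℝ) : ℂ) * cexp (rayExponent α γ x θ r))
      (I * (rayIntegrand α γ x θ r * rayExponentDeriv α γ x θ r)) r := by
  refine ((Real.hasDerivAt_rpow_const (Or.inl hr.ne')).ofReal_comp.mul
    (hasDerivAt_rayExponent_radius hr).cexp).congr_deriv ?_
  have hrpow (p : ℝ) : ((r ^ p : ℝ) : ℂ) = ((r ^ (p - 1) : ℝ) : ℂ) * r := by
    rw [← Complex.ofReal_mul, ← Real.rpow_add_one hr.ne', sub_add_cancel]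
  simp only [rayIntegrand, rayExponentDeriv]
  generalize cexp (rayExponent α γ x θ r) = e
  rw [hrpow (γ + 1), hrpow α, add_sub_cancel_right]
  push_cast
  ring_nf
  rw [Complex.I_sq]
  ring

lemma norm_rayExponentDeriv_le (hα : 0 ≤ α) (hγ : -1 ≤ γ) (hr : 0 ≤ r) :
    ‖rayExponentDeriv α γ x θ r‖ ≤ (γ + 1) + α * r ^ α + |x| * r := by
  have hγ' : ((γ : ℂ) + 1) = ((γ + 1 : ℝ) : ℂ) := by push_cast; rfl
  refine (norm_sub_le _ _).trans (add_le_add ((norm_add_le _ _).trans (add_le_add ?_ ?_)) ?_)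
  · rw [norm_neg, norm_mul, Complex.norm_I, one_mul, hγ', Complex.norm_real,
      Real.norm_of_nonneg (by linarith)]
  · simp [Complex.norm_exp, abs_of_nonneg hα, abs_of_nonneg (Real.rpow_nonneg hr α)]
  · simp [Complex.norm_exp, abs_of_nonneg hr]

lemma measurable_rayIntegrand : Measurable (rayIntegrand α γ x θ) := by
  unfold rayIntegrand rayExponent; fun_prop

lemma measurable_rayExponentDeriv : Measurable (rayExponentDeriv α γ x θ) := by
  unfold rayExponentDeriv; fun_prop

lemma re_rayIntegrand_zero :
    (rayIntegrand α γ x 0 r).re = r ^ γ * (Real.exp (-r ^ α) * Real.cos (x * r)) := by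
  simp [rayIntegrand, rayExponent, Complex.exp_re, ← Complex.ofReal_neg]

end RayIntegrand

section RayIntegral

variable {α γ x θ : ℝ}

lemma integrableOn_rayIntegrand (hα : 1 < α) (hγ : -1 < γ) (hθ : |α * θ| ≤ π / 3) :
    IntegrableOn (rayIntegrand α γ x θ) (Ioi 0) := by
  obtain ⟨M, hM⟩ := exists_norm_rpow_mul_exp_rayExponent_le hα γ x
  refine Integrable.mono' ((integrableOn_rpow_mul_exp_neg_mul_rpow (p := α) hγ (by linarith)
    (by norm_num : (0 : ℝ) < 1 / 4)).const_mul M) measurable_rayIntegrand.aestronglyMeasurable ?_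
  filter_upwards [self_mem_ae_restrict measurableSet_Ioi] with r hr using hM γ θ r hθ hr.le

lemma integral_rayIntegrand_mul_rayExponentDeriv (hα : 1 < α) (hγ : -1 < γ)
    (hθ : |α * θ| ≤ π / 3)
    (hint : IntegrableOn (fun r => rayIntegrand α γ x θ r * rayExponentDeriv α γ x θ r) (Ioi 0)) :
    ∫ r in Ioi 0, rayIntegrand α γ x θ r * rayExponentDeriv α γ x θ r = 0 := by
  obtain ⟨M, hM⟩ := exists_norm_rpow_mul_exp_rayExponent_le hα γ x
  set G : ℝ → ℂ := fun r => ((r ^ (γ + 1) : ℝ) : ℂ) * cexp (rayExponent α γ x θ r)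
  have hcont : ContinuousAt G 0 := by
    unfold G rayExponent
    fun_prop (disch := first | right; linarith)
  have hlim : Tendsto G atTop (𝓝 0) := by
    refine squeeze_zero_norm' ?_ (mul_zero M ▸ (tendsto_rpow_mul_exp_neg_mul_rpow_atTop_nhds_zero
      (by linarith : 0 < α) (γ + 1) (by norm_num : (0 : ℝ) < 1 / 4)).const_mul M)
    filter_upwards [eventually_ge_atTop 0] with r hr using hM (γ + 1) θ r hθ hr
  have h := integral_Ioi_of_hasDerivAt_of_tendsto hcont.continuousWithinAt
    (fun r hr => hasDerivAt_rpow_mul_exp_rayExponent_radius hr) (hint.const_mul I) hlim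
  have hG0 : G 0 = 0 := by simp [G, Real.zero_rpow (by linarith : γ + 1 ≠ 0)]
  rw [integral_const_mul, hG0, sub_zero] at h
  exact (mul_eq_zero.mp h).resolve_left Complex.I_ne_zero

lemma hasDerivAt_rayIntegral (hα : 1 < α) (hγ : -1 < γ) (hθ : |α * θ| ≤ π / 6) :
    HasDerivAt (rayIntegral α γ x) 0 θ := by
  have hα0 : 0 < α := by linarith
  have hδ : 0 < π / (6 * α) := by positivity
  have hball (t : ℝ) (ht : t ∈ Metric.ball θ (π / (6 * α))) : |α * t| ≤ π / 3 := by
    have := abs_mul_le_add_mul_of_mem_ball hα0 ht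
    rw [show α * (π / (6 * α)) = π / 6 by field_simp] at this
    linarith
  have hθ' := hball θ (Metric.mem_ball_self hδ)
  obtain ⟨M, hM⟩ := exists_norm_rpow_mul_exp_rayExponent_le hα γ x
  have hbound_ae : ∀ᵐ r ∂(volume.restrict (Ioi 0)), ∀ t ∈ Metric.ball θ (π / (6 * α)),
      ‖rayIntegrand α γ x t r * rayExponentDeriv α γ x t r‖ ≤
        M * (r ^ γ * Real.exp (-(1 / 4) * r ^ α) * ((γ + 1) + α * r ^ α + |x| * r)) := by
    filter_upwards [self_mem_ae_restrict measurableSet_Ioi] with r hr t ht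
    have hFt := hM γ t r (hball t ht) hr.le
    rw [norm_mul, ← mul_assoc]
    exact mul_le_mul hFt (norm_rayExponentDeriv_le hα0.le hγ.le hr.le) (norm_nonneg _)
      ((norm_nonneg _).trans hFt)
  obtain ⟨hint, hderiv⟩ := hasDerivAt_integral_of_dominated_loc_of_deriv_le
    (F := rayIntegrand α γ x) (μ := volume.restrict (Ioi 0))
    (Metric.ball_mem_nhds θ hδ) (.of_forall fun _ => measurable_rayIntegrand.aestronglyMeasurable)
    (integrableOn_rayIntegrand hα hγ hθ')
    (measurable_rayIntegrand.mul measurable_rayExponentDeriv).aestronglyMeasurable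
    hbound_ae
    ((integrableOn_rpow_mul_exp_neg_mul_rpow_mul_add hγ hα0 (by norm_num) _ _ _).const_mul M)
    (ae_of_all _ fun r t _ => hasDerivAt_rayIntegrand_angle)
  rwa [integral_rayIntegrand_mul_rayExponentDeriv hα hγ hθ' hint] at hderiv

lemma rayIntegral_eq_rayIntegral_zero (hα : 1 < α) (hγ : -1 < γ) (hθ : 0 ≤ θ)
    (hθ' : α * θ ≤ π / 6) : rayIntegral α γ x θ = rayIntegral α γ x 0 := by
  have hderiv (t : ℝ) (ht : t ∈ Icc 0 θ) : HasDerivAt (rayIntegral α γ x) 0 t := by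
    refine hasDerivAt_rayIntegral hα hγ ?_
    rw [abs_of_nonneg (by nlinarith [ht.1])]
    nlinarith [ht.2]
  exact constant_of_has_deriv_right_zero
    (fun t ht => (hderiv t ht).continuousAt.continuousWithinAt)
    (fun t ht => (hderiv t (Ico_subset_Icc_self ht)).hasDerivWithinAt) θ ⟨hθ, le_rfl⟩

lemma norm_rayIntegral_le (hα : 1 < α) (hγ : -1 < γ) (hx : 0 < x) :
    ‖rayIntegral α γ x (π / (6 * α))‖ ≤
      (1 / (x * Real.sin (π / (6 * α)))) ^ (γ + 1) * Real.Gamma (γ + 1) := by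
  have hα0 : 0 < α := by linarith
  have hs := sin_pi_div_six_mul_pos (by linarith : 1 / 6 < α)
  have hxs := mul_pos hx hs
  have hcos : 1 / 2 ≤ Real.cos (α * (π / (6 * α))) := by
    rw [show α * (π / (6 * α)) = π / 6 by field_simp]
    exact half_le_cos_of_abs_le (by rw [abs_of_pos (by positivity)]; linarith [Real.pi_pos])
  rw [← integral_rpow_mul_exp_neg_mul_Ioi (by linarith) hxs, add_sub_cancel_right]
  refine norm_integral_le_of_norm_le ?_ ?_
  · refine (integrableOn_rpow_mul_exp_neg_mul_rpow (p := 1) hγ one_pos hxs).congr_fun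
      (fun r _ => ?_) measurableSet_Ioi
    simp only [Real.rpow_one, neg_mul]
  · filter_upwards [self_mem_ae_restrict measurableSet_Ioi] with r (hr : 0 < r)
    rw [rayIntegrand, norm_rpow_mul_exp_rayExponent γ hr.le]
    gcongr
    nlinarith [Real.rpow_nonneg hr.le α]

end RayIntegral

lemma fracLapGKernel_eq_integral_Ioi (α γ x : ℝ) :
    fracLapGKernel α γ x = π⁻¹ * ∫ r in Ioi 0, r ^ γ * (Real.exp (-r ^ α) * Real.cos (x * r)) := by
  have h (ξ : ℝ) : |ξ| ^ γ * (cexp (-(I * ξ * x) - ((|ξ| ^ α : ℝ) : ℂ))).re =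
      |ξ| ^ γ * (Real.exp (-|ξ| ^ α) * Real.cos (x * |ξ|)) := by
    rcases abs_choice ξ with h | h <;> simp [Complex.exp_re, h, mul_comm ξ x]
  rw [fracLapGKernel]
  simp only [h]
  rw [integral_comp_abs (f := fun r => r ^ γ * (Real.exp (-r ^ α) * Real.cos (x * r)))]
  ring

lemma fracLapGKernel_neg (α γ x : ℝ) : fracLapGKernel α γ (-x) = fracLapGKernel α γ x := by
  simp only [fracLapGKernel_eq_integral_Ioi, neg_mul, Real.cos_neg]

lemma abs_fracLapGKernel_le {α γ : ℝ} (hα : 0 < α) (hγ : -1 < γ) (x : ℝ) :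
    |fracLapGKernel α γ x| ≤ π⁻¹ * (1 / α * Real.Gamma ((γ + 1) / α)) := by
  rw [fracLapGKernel_eq_integral_Ioi, abs_mul, abs_of_pos (inv_pos.2 Real.pi_pos),
    ← integral_rpow_mul_exp_neg_rpow hα hγ, ← Real.norm_eq_abs]
  gcongr
  refine norm_integral_le_of_norm_le (integrableOn_rpow_mul_exp_neg_rpow hγ hα) ?_
  filter_upwards [self_mem_ae_restrict measurableSet_Ioi] with r (hr : 0 < r)
  rw [norm_mul, norm_mul, Real.norm_of_nonneg (by positivity), Real.norm_of_nonneg (by positivity)]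
  gcongr
  exact mul_le_of_le_one_right (by positivity) (Real.abs_cos_le_one _)

lemma abs_fracLapGKernel_le_of_pos {α γ : ℝ} (hα : 1 < α) (hγ : -1 < γ) {x : ℝ} (hx : 0 < x) :
    |fracLapGKernel α γ x| ≤
      π⁻¹ * ((1 / (x * Real.sin (π / (6 * α)))) ^ (γ + 1) * Real.Gamma (γ + 1)) := by
  have hα0 : 0 < α := by linarith
  have hre : ∫ r in Ioi 0, r ^ γ * (Real.exp (-r ^ α) * Real.cos (x * r)) =
      (rayIntegral α γ x 0).re := by
    have h := integral_re (integrableOn_rayIntegrand hα hγ (x := x)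
      (by rw [mul_zero, abs_zero]; positivity))
    rw [rayIntegral]
    simpa only [RCLike.re_to_complex, re_rayIntegrand_zero] using h
  rw [fracLapGKernel_eq_integral_Ioi, hre, abs_mul, abs_of_pos (inv_pos.2 Real.pi_pos),
    ← rayIntegral_eq_rayIntegral_zero hα hγ (θ := π / (6 * α)) (by positivity)
      (by field_simp; rfl)]
  gcongr
  exact (Complex.abs_re_le_norm _).trans (norm_rayIntegral_le hα hγ hx)

lemma abs_fracLapGKernel_mul_rpow_le {α γ : ℝ} (hα : 1 < α) (hγ : -1 < γ) (x : ℝ) :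
    |fracLapGKernel α γ x| * |x| ^ (γ + 1) ≤
      π⁻¹ * ((1 / Real.sin (π / (6 * α))) ^ (γ + 1) * Real.Gamma (γ + 1)) := by
  have hs := sin_pi_div_six_mul_pos (by linarith : 1 / 6 < α)
  rcases eq_or_ne x 0 with rfl | hx
  · rw [abs_zero, Real.zero_rpow (by linarith), mul_zero]
    have := Real.Gamma_pos_of_pos (show 0 < γ + 1 by linarith)
    positivity
  have hK : |fracLapGKernel α γ x| = |fracLapGKernel α γ (|x|)| := by
    rcases abs_choice x with h | h <;> simp [h, fracLapGKernel_neg]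
  calc |fracLapGKernel α γ x| * |x| ^ (γ + 1)
      ≤ π⁻¹ * ((1 / (|x| * Real.sin (π / (6 * α)))) ^ (γ + 1) * Real.Gamma (γ + 1)) *
          |x| ^ (γ + 1) := by
        rw [hK]; gcongr; exact abs_fracLapGKernel_le_of_pos hα hγ (abs_pos.2 hx)
    _ = π⁻¹ * ((1 / Real.sin (π / (6 * α))) ^ (γ + 1) * Real.Gamma (γ + 1)) := by
        rw [mul_assoc, mul_right_comm _ (Real.Gamma _),
          ← Real.mul_rpow (by positivity) (by positivity), one_div_mul_eq_div,
          div_mul_cancel_left₀ (abs_ne_zero.2 hx), one_div]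

theorem fracLap_GKernel_decay_general (α γ : ℝ) (hα : 1 < α) (hγ : 0 < γ) :
    ∃ C : ℝ, 0 < C ∧
      ∀ x : ℝ, |fracLapGKernel α γ x| ≤ C / (1 + |x| ^ (1 + γ)) := by
  have hs := sin_pi_div_six_mul_pos (by linarith : 1 / 6 < α)
  refine ⟨π⁻¹ * (1 / α * Real.Gamma ((γ + 1) / α)) +
    π⁻¹ * ((1 / Real.sin (π / (6 * α))) ^ (γ + 1) * Real.Gamma (γ + 1)), by positivity,
    fun x => ?_⟩
  rw [le_div_iff₀ (by positivity), mul_one_add, add_comm 1 γ]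
  exact add_le_add (abs_fracLapGKernel_le (by linarith) (by linarith) x)
    (abs_fracLapGKernel_mul_rpow_le hα (by linarith) x)

/-- Polynomial decay of the fractional Laplacian of `G`:
for `α ∈ (1,2]` and `γ > 0` there is `C = C(α,γ) > 0` with
`|(−Δ)^{γ/2}G(x)| ≤ C / (1 + |x|^{1+γ})` for all `x`. -/
theorem fracLap_GKernel_decay (α γ : ℝ) (hα : 1 < α) (hα' : α ≤ 2) (hγ : 0 < γ) :
    ∃ C : ℝ, 0 < C ∧
      ∀ x : ℝ, |fracLapGKernel α γ x| ≤ C / (1 + |x| ^ (1 + γ)) :=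
  fracLap_GKernel_decay_general α γ hα hγ
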